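/- arXiv:1403.7973 — 2 statements merged into one kernel-verified Lean document; each statement's English description precedes it below -/
import Mathlib

section
/- For x > 0, real θ, and real a > 0, the integral ∫_0^∞ e^{-πxτ² - 2πkωτ} sinh(2πaωτ) dτ, where ω = e^{-πi/4} and k is a positive integer, equals (1/(4√x))·{E(k-a) - E(k+a)}, where E(t) = e^{-πit²/x} erfc(ω t √(π/x)). -/
open MeasureTheory

noncomputable def cerf (z : ℂ) : ℂ :=
  (2 / Real.sqrt Real.pi) * ∫ t in (0:ℝ)..1, z * Complex.exp (-((t : ℂ) * z) ^ 2)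

noncomputable def cerfc (z : ℂ) : ℂ := 1 - cerf z

noncomputable def Efun (x t : ℝ) : ℂ :=
  Complex.exp (-(Real.pi : ℂ) * Complex.I * (t : ℂ) ^ 2 / (x : ℂ)) *
    cerfc (Complex.exp (-(Real.pi : ℂ) * Complex.I / 4) * (t : ℂ) *
      (Real.sqrt (Real.pi / x) : ℂ))

/-- `ω = e^{-πi/4}`. -/
noncomputable def omg : ℂ := Complex.exp (-(Real.pi : ℂ) * Complex.I / 4)

/-! Writing `sinh` as a difference of exponentials reduces everything to the half-line Gaussian
`∫₀^∞ exp(-ατ² - βτ) dτ`, and completing the square turns that into `∫₀^∞ exp(-(s + z)²) ds` with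
`z = β / (2√α)`. For every complex `z` this equals `(√π / 2) erfc z`: along `y ↦ y z` the
integral has derivative `-z exp(-(y z)²)` (differentiate under the integral sign, then integrate
in `s`), which is also the derivative of `-(√π / 2) erf (y z)`, and both agree at `y = 0`.
For `α = πx`, `β = 2πbω` the relation `ω² = -i` gives `z = ωb√(π/x)` and the phase
`exp(β² / 4α) = exp(-πib²/x)`. -/

open Set Filter Real
open scoped Complex

lemma omg_sq : omg ^ 2 = -Complex.I := by
  rw [omg, ← Complex.exp_nat_mul, ← Complex.exp_neg_pi_div_two_mul_I]
  congr 1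
  push_cast
  ring

lemma norm_cexp_neg_add_sq_le {s : ℝ} (hs : 0 ≤ s) {w : ℂ} {M : ℝ} (hw : ‖w‖ ≤ M) :
    ‖cexp (-((s : ℂ) + w) ^ 2)‖ ≤ rexp (-s ^ 2 + 2 * M * s + M ^ 2) := by
  rw [Complex.norm_exp, Real.exp_le_exp]
  have hre := (Complex.abs_re_le_norm w).trans hw
  have him := (Complex.abs_im_le_norm w).trans hw
  have hre_sq : (-((s : ℂ) + w) ^ 2).re = -s ^ 2 - 2 * s * w.re - w.re ^ 2 + w.im ^ 2 := by
    simp only [sq, Complex.neg_re, Complex.mul_re, Complex.add_re, Complex.add_im,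
      Complex.ofReal_re, Complex.ofReal_im]
    ring
  rw [hre_sq]
  nlinarith [abs_le.1 hre, abs_le.1 him, sq_abs w.im, abs_nonneg w.im]

lemma norm_mul_cexp_neg_add_sq_le {s : ℝ} (hs : 0 ≤ s) {w : ℂ} {M : ℝ} (hw : ‖w‖ ≤ M) :
    ‖((s : ℂ) + w) * cexp (-((s : ℂ) + w) ^ 2)‖ ≤
      (1 + M) * rexp (-s ^ 2 + (2 * M + 1) * s + M ^ 2) := by
  have hM : 0 ≤ M := (norm_nonneg w).trans hw
  have hlin : ‖(s : ℂ) + w‖ ≤ (1 + M) * rexp s := calc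
    ‖(s : ℂ) + w‖ ≤ s + M := by
      refine (norm_add_le _ _).trans (add_le_add (le_of_eq ?_) hw)
      rw [Complex.norm_real, Real.norm_of_nonneg hs]
    _ ≤ (1 + M) * (s + 1) := by nlinarith
    _ ≤ (1 + M) * rexp s := by gcongr; linarith [Real.add_one_le_exp s]
  calc ‖((s : ℂ) + w) * cexp (-((s : ℂ) + w) ^ 2)‖
      ≤ (1 + M) * rexp s * rexp (-s ^ 2 + 2 * M * s + M ^ 2) := by
        rw [norm_mul]; gcongr; exact norm_cexp_neg_add_sq_le hs hw
    _ = (1 + M) * rexp (-s ^ 2 + (2 * M + 1) * s + M ^ 2) := by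
        rw [mul_assoc, ← Real.exp_add]; ring_nf

lemma integrable_exp_neg_sq_add_mul_add (B C : ℝ) :
    Integrable fun s : ℝ => rexp (-s ^ 2 + B * s + C) := by
  refine (integrable_cexp_quadratic (b := 1) (by simp) B C).norm.congr (ae_of_all _ fun s => ?_)
  simp [Complex.norm_exp, ← Complex.ofReal_pow]

lemma hasDerivAt_cexp_neg_add_sq (w : ℂ) (s : ℝ) :
    HasDerivAt (fun s : ℝ => cexp (-((s : ℂ) + w) ^ 2))
      (-2 * (((s : ℂ) + w) * cexp (-((s : ℂ) + w) ^ 2))) s := by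
  have h := ((((hasDerivAt_id (s : ℂ)).add_const w).fun_pow 2).fun_neg).cexp
  exact (h.congr_deriv (by simp; ring)).comp_ofReal

lemma integrable_cexp_neg_add_sq (w : ℂ) : Integrable fun s : ℝ => cexp (-((s : ℂ) + w) ^ 2) := by
  refine (integrable_cexp_quadratic (b := 1) (by simp) (-2 * w) (-w ^ 2)).congr
    (ae_of_all _ fun s => ?_)
  simp only
  ring_nf

lemma integrableOn_Ioi_mul_cexp_neg_add_sq (w : ℂ) :
    IntegrableOn (fun s : ℝ => ((s : ℂ) + w) * cexp (-((s : ℂ) + w) ^ 2)) (Ioi 0) :=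
  ((integrable_exp_neg_sq_add_mul_add _ _).const_mul (1 + ‖w‖)).integrableOn.mono'
    (by fun_prop) ((ae_restrict_iff' measurableSet_Ioi).2 (ae_of_all _ fun _ hs =>
      norm_mul_cexp_neg_add_sq_le (le_of_lt hs) le_rfl))

lemma integral_Ioi_mul_cexp_neg_add_sq (w : ℂ) :
    ∫ s in Ioi (0 : ℝ), ((s : ℂ) + w) * cexp (-((s : ℂ) + w) ^ 2) = cexp (-w ^ 2) / 2 := by
  have hint := (integrableOn_Ioi_mul_cexp_neg_add_sq w).const_mul (-2)
  have hlim := tendsto_zero_of_hasDerivAt_of_integrableOn_Ioi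
    (fun s _ => hasDerivAt_cexp_neg_add_sq w s) hint (integrable_cexp_neg_add_sq w).integrableOn
  have hftc := integral_Ioi_of_hasDerivAt_of_tendsto'
    (fun s _ => hasDerivAt_cexp_neg_add_sq w s) hint hlim
  rw [integral_const_mul] at hftc
  simp only [Complex.ofReal_zero, zero_add, zero_sub] at hftc
  linear_combination hftc / (-2)

lemma hasDerivAt_integral_Ioi_cexp_neg_add_mul_sq (c : ℂ) (y₀ : ℝ) :
    HasDerivAt (fun y : ℝ => ∫ s in Ioi (0 : ℝ), cexp (-((s : ℂ) + y * c) ^ 2))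
      (-c * cexp (-(y₀ * c) ^ 2)) y₀ := by
  set M := (|y₀| + 1) * ‖c‖
  have hM : ∀ y ∈ Metric.ball y₀ 1, ‖(y : ℂ) * c‖ ≤ M := fun y hy => by
    rw [norm_mul, Complex.norm_real, Real.norm_eq_abs]
    have : |y| ≤ |y₀| + 1 := by
      have := abs_sub_abs_le_abs_sub y y₀
      rw [Metric.mem_ball, Real.dist_eq] at hy
      linarith
    exact mul_le_mul_of_nonneg_right this (norm_nonneg c)
  have hbound : ∀ᵐ (s : ℝ) ∂(volume.restrict (Ioi (0 : ℝ))), ∀ y ∈ Metric.ball y₀ 1,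
      ‖-2 * c * (((s : ℂ) + y * c) * cexp (-((s : ℂ) + y * c) ^ 2))‖ ≤
        2 * ‖c‖ * ((1 + M) * rexp (-s ^ 2 + (2 * M + 1) * s + M ^ 2)) :=
    (ae_restrict_iff' measurableSet_Ioi).2 (ae_of_all _ fun s hs y hy => by
      rw [norm_mul, norm_mul, norm_neg, Complex.norm_ofNat]
      gcongr
      exact norm_mul_cexp_neg_add_sq_le (le_of_lt hs) (hM y hy))
  have hdiff : ∀ᵐ (s : ℝ) ∂(volume.restrict (Ioi (0 : ℝ))), ∀ y ∈ Metric.ball y₀ 1,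
      HasDerivAt (fun y : ℝ => cexp (-((s : ℂ) + y * c) ^ 2))
        (-2 * c * (((s : ℂ) + y * c) * cexp (-((s : ℂ) + y * c) ^ 2))) y :=
    ae_of_all _ fun s y _ => by
      have h := (((((hasDerivAt_id (y : ℂ)).mul_const c).const_add (s : ℂ)).fun_pow 2).fun_neg).cexp
      exact (h.congr_deriv (by simp; ring)).comp_ofReal
  have hdom := hasDerivAt_integral_of_dominated_loc_of_deriv_le (μ := volume.restrict (Ioi 0))
    (Metric.ball_mem_nhds y₀ one_pos)
    (Eventually.of_forall fun y =>
      (integrable_cexp_neg_add_sq (y * c)).aestronglyMeasurable.restrict)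
    (integrable_cexp_neg_add_sq (y₀ * c)).integrableOn (by fun_prop) hbound
    (((integrable_exp_neg_sq_add_mul_add _ _).const_mul _).const_mul _).integrableOn hdiff
  refine hdom.2.congr_deriv ?_
  rw [integral_const_mul, integral_Ioi_mul_cexp_neg_add_sq]
  ring

lemma integral_Ioi_cexp_neg_sq : ∫ s in Ioi (0 : ℝ), cexp (-(s : ℂ) ^ 2) = √π / 2 := by
  have h := integral_gaussian_Ioi 1
  simp only [neg_one_mul, div_one] at h
  rw [← Complex.ofReal_ofNat, ← Complex.ofReal_div, ← h, ← integral_complex_ofReal]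
  push_cast
  rfl

theorem integral_Ioi_cexp_neg_add_sq (z : ℂ) :
    ∫ s in Ioi (0 : ℝ), cexp (-((s : ℂ) + z) ^ 2) = √π / 2 * cerfc z := by
  set H : ℝ → ℂ := fun y => (∫ s in Ioi (0 : ℝ), cexp (-((s : ℂ) + y * z) ^ 2)) +
    z * ∫ u in (0 : ℝ)..y, cexp (-((u : ℂ) * z) ^ 2)
  have hH : ∀ y, HasDerivAt H 0 y := fun y => by
    have hcont : Continuous fun u : ℝ => cexp (-((u : ℂ) * z) ^ 2) := by fun_prop
    have := (hasDerivAt_integral_Ioi_cexp_neg_add_mul_sq z y).add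
      ((intervalIntegral.integral_hasDerivAt_right (hcont.intervalIntegrable 0 y)
        hcont.stronglyMeasurable.stronglyMeasurableAtFilter hcont.continuousAt).const_mul z)
    exact this.congr_deriv (by ring)
  have hconst : H 1 = H 0 :=
    is_const_of_deriv_eq_zero (fun y => (hH y).differentiableAt) (fun y => (hH y).deriv) 1 0
  simp only [H, Complex.ofReal_one, one_mul, Complex.ofReal_zero, zero_mul, add_zero,
    intervalIntegral.integral_same, mul_zero, integral_Ioi_cexp_neg_sq] at hconst
  have hπ : (√π : ℂ) ≠ 0 := Complex.ofReal_ne_zero.2 (Real.sqrt_pos.2 pi_pos).ne'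
  have hcancel : (√π : ℂ) / 2 * (2 / √π) = 1 := by field_simp
  rw [cerfc, cerf, intervalIntegral.integral_const_mul]
  linear_combination hconst + (z * ∫ u in (0 : ℝ)..1, cexp (-((u : ℂ) * z) ^ 2)) * hcancel

theorem integral_Ioi_cexp_neg_mul_sq_sub_mul {α : ℝ} (hα : 0 < α) (β : ℂ) :
    ∫ τ in Ioi (0 : ℝ), cexp (-α * τ ^ 2 - β * τ) =
      √π / (2 * √α) * cexp (β ^ 2 / (4 * α)) * cerfc (β / (2 * √α)) := by
  set w := β / (2 * √α)
  have hsqrt : (√α : ℂ) ≠ 0 := Complex.ofReal_ne_zero.2 (Real.sqrt_pos.2 hα).ne'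
  have hsq : (√α : ℂ) ^ 2 = α := by exact_mod_cast Real.sq_sqrt hα.le
  have hsquare : ∀ τ : ℝ, cexp (-α * τ ^ 2 - β * τ) =
      cexp (β ^ 2 / (4 * α)) * cexp (-(((√α * τ : ℝ) : ℂ) + w) ^ 2) := fun τ => by
    rw [← Complex.exp_add]
    congr 1
    simp only [w, ← hsq]
    push_cast
    field_simp
    ring
  have hscale := integral_comp_mul_left_Ioi (fun s : ℝ => cexp (-((s : ℂ) + w) ^ 2)) 0
    (Real.sqrt_pos.2 hα)
  rw [mul_zero, integral_Ioi_cexp_neg_add_sq, Complex.real_smul] at hscale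
  simp only [hsquare, integral_const_mul, hscale]
  push_cast
  field_simp

lemma integrable_cexp_neg_pi_mul_sq_sub_omg {x : ℝ} (hx : 0 < x) (b : ℝ) :
    Integrable fun τ : ℝ => cexp (-π * x * τ ^ 2 - 2 * π * b * omg * τ) := by
  have hre : 0 < ((π : ℂ) * x).re := by
    rw [← Complex.ofReal_mul, Complex.ofReal_re]; positivity
  refine (integrable_cexp_quadratic hre (-2 * π * b * omg) 0).congr (ae_of_all _ fun τ => ?_)
  simp only
  ring_nf

lemma integral_Ioi_cexp_neg_pi_mul_sq_sub_omg {x : ℝ} (hx : 0 < x) (b : ℝ) :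
    ∫ τ in Ioi (0 : ℝ), cexp (-π * x * τ ^ 2 - 2 * π * b * omg * τ) = 1 / (2 * √x) * Efun x b := by
  have h := integral_Ioi_cexp_neg_mul_sq_sub_mul (mul_pos pi_pos hx) (2 * π * b * omg)
  have hπ : (√π : ℂ) ≠ 0 := Complex.ofReal_ne_zero.2 (Real.sqrt_pos.2 pi_pos).ne'
  have hx' : (√x : ℂ) ≠ 0 := Complex.ofReal_ne_zero.2 (Real.sqrt_pos.2 hx).ne'
  have hπsq : (√π : ℂ) ^ 2 = π := by exact_mod_cast Real.sq_sqrt pi_pos.le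
  have hsqrt : (√(π * x) : ℂ) = √π * √x := by rw [Real.sqrt_mul pi_pos.le]; push_cast; rfl
  have harg : 2 * π * b * omg / (2 * √(π * x)) = cexp (-π * Complex.I / 4) * b * √(π / x) := by
    rw [hsqrt, Real.sqrt_div' _ hx.le, ← omg]
    push_cast
    field_simp
    rw [← hπsq]
    ring
  have hphase : (2 * π * b * omg) ^ 2 / (4 * (π * x : ℝ)) = -π * Complex.I * b ^ 2 / x := by
    have hπ0 : (π : ℂ) ≠ 0 := Complex.ofReal_ne_zero.2 pi_pos.ne'
    push_cast
    rw [mul_pow, omg_sq]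
    field_simp
    ring
  have hscale : √π / (2 * √(π * x) : ℂ) = 1 / (2 * √x) := by
    rw [hsqrt]
    field_simp
  rw [harg, hphase, hscale] at h
  rw [Efun, ← mul_assoc, ← h]
  congr 1
  ext τ
  push_cast
  ring_nf

theorem gauss_integral_eval_general (x a : ℝ) (hx : 0 < x) (k : ℕ) :
    (∫ τ in Set.Ioi (0:ℝ),
        Complex.exp (-(Real.pi : ℂ) * (x : ℂ) * (τ : ℂ) ^ 2 - 2 * (Real.pi : ℂ) * (k : ℂ) * omg * (τ : ℂ)) *
          Complex.sinh (2 * (Real.pi : ℂ) * (a : ℂ) * omg * (τ : ℂ)))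
      = (1 / (4 * (Real.sqrt x : ℂ))) * (Efun x ((k : ℝ) - a) - Efun x ((k : ℝ) + a)) := by
  have hsinh : ∀ τ : ℝ,
      cexp (-π * x * τ ^ 2 - 2 * π * k * omg * τ) * Complex.sinh (2 * π * a * omg * τ) =
        (cexp (-π * x * τ ^ 2 - 2 * π * ((k - a : ℝ) : ℂ) * omg * τ) -
          cexp (-π * x * τ ^ 2 - 2 * π * ((k + a : ℝ) : ℂ) * omg * τ)) / 2 := fun τ => by
    rw [Complex.sinh, mul_div_assoc', mul_sub, ← Complex.exp_add, ← Complex.exp_add]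
    push_cast
    ring_nf
  have hx' : (√x : ℂ) ≠ 0 := Complex.ofReal_ne_zero.2 (Real.sqrt_pos.2 hx).ne'
  simp_rw [hsinh]
  rw [integral_div, integral_sub (integrable_cexp_neg_pi_mul_sq_sub_omg hx _).integrableOn
    (integrable_cexp_neg_pi_mul_sq_sub_omg hx _).integrableOn,
    integral_Ioi_cexp_neg_pi_mul_sq_sub_omg hx, integral_Ioi_cexp_neg_pi_mul_sq_sub_omg hx]
  field_simp
  ring

/-- For `x > 0`, `a > 0` and a positive integer `k`,
`∫_0^∞ e^{-πxτ² - 2πkωτ} sinh(2πaωτ) dτ = (1/(4√x))·(E(k-a) - E(k+a))`. -/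
theorem gauss_integral_eval (x a : ℝ) (hx : 0 < x) (ha : 0 < a) (k : ℕ) (hk : 1 ≤ k) :
    (∫ τ in Set.Ioi (0:ℝ),
        Complex.exp (-(Real.pi : ℂ) * (x : ℂ) * (τ : ℂ) ^ 2 - 2 * (Real.pi : ℂ) * (k : ℂ) * omg * (τ : ℂ)) *
          Complex.sinh (2 * (Real.pi : ℂ) * (a : ℂ) * omg * (τ : ℂ)))
      = (1 / (4 * (Real.sqrt x : ℂ))) * (Efun x ((k : ℝ) - a) - Efun x ((k : ℝ) + a)) :=
  gauss_integral_eval_general x a hx k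
end

section
/- For 0 < x < 1, real θ with |θ| ≤ 1/2, and a positive integer N, with f(t) := exp(πixt² + 2πiθt), the integral ∫_0^N f(t) dt equals (e^{πi/4}/(2√x))·{E(θ) - f(N)·E(Nx+θ)}, where E(t) := e^{-πit²/x} erfc(e^{-πi/4} t √(π/x)). -/
open MeasureTheory

/-- `f(t) = exp(πixt² + 2πiθt)` for real `t`. -/
noncomputable def ff (x θ t : ℝ) : ℂ :=
  Complex.exp ((Real.pi : ℂ) * Complex.I * (x : ℂ) * (t : ℂ) ^ 2 +
    2 * (Real.pi : ℂ) * Complex.I * (θ : ℂ) * (t : ℂ))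

/-!
The function `u ↦ f(u) E(ux + θ)` is a constant multiple of a primitive of `f`, so the identity is
the fundamental theorem of calculus. To see this write `E(t) = erfcx(c t)` with
`erfcx w = e^{w²} erfc w` and `c = e^{-πi/4} √(π/x)`, so `c² = -πi/x`. Since
`erfcx' w = 2w erfcx w - 2/√π`, differentiating `f(u) erfcx(c(ux + θ))` produces
`2πi(xu + θ) f erfcx + 2c²x(ux + θ) f erfcx - 2cx f/√π`, whose first two terms cancel.
The derivative of `erf` is obtained from `erf z = (2/√π)(F z - F 0)`, where `F` is a primitive of
the entire function `e^{-w²}`.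
-/

section

open Complex

theorem integral_segment_eq_sub_of_hasDerivAt {F g : ℂ → ℂ} (hF : ∀ w, HasDerivAt F (g w) w)
    (hg : Continuous g) (z : ℂ) :
    ∫ t in (0:ℝ)..1, z * g (t * z) = F z - F 0 := by
  have hderiv : ∀ t ∈ Set.uIcc (0:ℝ) 1,
      HasDerivAt (fun t : ℝ => F (t * z)) (z * g (t * z)) t := fun t _ => by
    have := ((hF (t * z)).comp (t : ℂ) ((hasDerivAt_id (t : ℂ)).mul_const z)).comp_ofReal
    simpa [mul_comm] using this
  rw [intervalIntegral.integral_eq_sub_of_hasDerivAt hderiv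
    (by apply Continuous.intervalIntegrable; fun_prop)]
  simp

theorem hasDerivAt_cerf (z : ℂ) :
    HasDerivAt cerf (2 / Real.sqrt Real.pi * exp (-z ^ 2)) z := by
  obtain ⟨F, hF⟩ := (show Differentiable ℂ fun w : ℂ => exp (-w ^ 2) by fun_prop).isExactOn_univ
  have hcerf : cerf = fun z => 2 / Real.sqrt Real.pi * (F z - F 0) := by
    funext z
    rw [cerf, ← integral_segment_eq_sub_of_hasDerivAt (fun w => hF w trivial) (by fun_prop) z]
  rw [hcerf]
  exact ((hF z trivial).sub_const (F 0)).const_mul _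

noncomputable def erfcx (w : ℂ) : ℂ := exp (w ^ 2) * cerfc w

theorem hasDerivAt_erfcx (w : ℂ) :
    HasDerivAt erfcx (2 * w * erfcx w - 2 / Real.sqrt Real.pi) w := by
  have hexp : exp (w ^ 2) * exp (-w ^ 2) = 1 := by rw [← exp_add, add_neg_cancel, exp_zero]
  refine (((hasDerivAt_pow 2 w).cexp).mul ((hasDerivAt_cerf w).const_sub 1)).congr_deriv ?_
  simp only [erfcx, cerfc]
  linear_combination (-(2 / Real.sqrt Real.pi : ℂ)) * hexp

noncomputable def efunScale (x : ℝ) : ℂ := exp (-Real.pi * I / 4) * Real.sqrt (Real.pi / x)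

theorem exp_neg_pi_mul_I_div_four_sq : exp (-Real.pi * I / 4) ^ 2 = -I := by
  rw [← exp_nat_mul,
    show ((2 : ℕ) : ℂ) * (-Real.pi * I / 4) = -(Real.pi / 2 * I) by push_cast; ring,
    exp_neg, exp_pi_div_two_mul_I, inv_I]

theorem efunScale_sq {x : ℝ} (hx : 0 ≤ x) : efunScale x ^ 2 = -Real.pi * I / x := by
  rw [efunScale, mul_pow, exp_neg_pi_mul_I_div_four_sq, ← ofReal_pow,
    Real.sq_sqrt (div_nonneg Real.pi_nonneg hx)]
  push_cast
  ring

theorem Efun_eq_erfcx {x : ℝ} (hx : 0 ≤ x) (t : ℝ) : Efun x t = erfcx (efunScale x * t) := by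
  rw [Efun, erfcx, mul_pow, efunScale_sq hx, efunScale]
  ring_nf

theorem hasDerivAt_ff (x θ u : ℝ) :
    HasDerivAt (ff x θ) (2 * Real.pi * I * (x * u + θ) * ff x θ u) u := by
  have h := (((hasDerivAt_pow 2 (u : ℂ)).const_mul (Real.pi * I * x)).add
    ((hasDerivAt_id (u : ℂ)).const_mul (2 * Real.pi * I * θ))).cexp.comp_ofReal
  exact h.congr_deriv (by simp only [ff, Pi.add_apply, id]; ring)

theorem hasDerivAt_ff_mul_erfcx {x : ℝ} (hx : 0 < x) (θ u : ℝ) :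
    HasDerivAt (fun u : ℝ => ff x θ u * erfcx (efunScale x * (u * x + θ)))
      (-(2 * efunScale x * x / Real.sqrt Real.pi) * ff x θ u) u := by
  have hlin : HasDerivAt (fun u : ℝ => efunScale x * (u * x + θ)) (efunScale x * x) u := by
    have := (((hasDerivAt_id (u : ℂ)).mul_const (x : ℂ)).add_const (θ : ℂ)).const_mul
      (efunScale x)
    simpa using this.comp_ofReal
  have hsq : efunScale x ^ 2 * x = -Real.pi * I := by
    rw [efunScale_sq hx.le]
    field_simp [(show (x : ℂ) ≠ 0 by exact_mod_cast hx.ne')]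
  refine ((hasDerivAt_ff x θ u).mul ((hasDerivAt_erfcx _).comp (u : ℝ) hlin)).congr_deriv ?_
  simp only [Function.comp_apply]
  linear_combination (2 * (u * x + θ) * ff x θ u * erfcx (efunScale x * (u * x + θ))) * hsq

theorem exp_pi_mul_I_div_four_mul_efunScale {x : ℝ} (hx : 0 < x) :
    exp (Real.pi * I / 4) / (2 * Real.sqrt x) * (2 * efunScale x * x / Real.sqrt Real.pi) = 1 := by
  have hsx : (Real.sqrt x : ℂ) ≠ 0 := by exact_mod_cast (Real.sqrt_pos.2 hx).ne'
  have hsπ : (Real.sqrt Real.pi : ℂ) ≠ 0 := by exact_mod_cast (Real.sqrt_pos.2 Real.pi_pos).ne'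
  have hxsq : (x : ℂ) = Real.sqrt x ^ 2 := by
    exact_mod_cast (Real.sq_sqrt hx.le).symm
  rw [efunScale, Real.sqrt_div' _ hx.le]
  push_cast
  field_simp
  rw [← exp_add, add_neg_cancel, exp_zero, one_mul, hxsq]

end

theorem JN_eval_general (x θ : ℝ) (hx0 : 0 < x)
    (N : ℕ) :
    (∫ t in (0:ℝ)..(N : ℝ), ff x θ t)
      = Complex.exp ((Real.pi : ℂ) * Complex.I / 4) / (2 * (Real.sqrt x : ℂ)) *
        (Efun x θ - ff x θ (N : ℝ) * Efun x ((N : ℝ) * x + θ)) := by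
  set K := Complex.exp ((Real.pi : ℂ) * Complex.I / 4) / (2 * (Real.sqrt x : ℂ))
  have hprimitive : ∀ u ∈ Set.uIcc (0:ℝ) N, HasDerivAt
      (fun u : ℝ => -K * (ff x θ u * erfcx (efunScale x * (u * x + θ)))) (ff x θ u) u := by
    intro u _
    have h := (hasDerivAt_ff_mul_erfcx hx0 θ u).const_mul (-K)
    rwa [← mul_assoc, neg_mul_neg, exp_pi_mul_I_div_four_mul_efunScale hx0, one_mul] at h
  have hcont : Continuous (ff x θ) :=
    continuous_iff_continuousAt.2 fun u => (hasDerivAt_ff x θ u).continuousAt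
  have hff_zero : ff x θ 0 = 1 := by simp [ff]
  rw [intervalIntegral.integral_eq_sub_of_hasDerivAt hprimitive (hcont.intervalIntegrable _ _),
    Efun_eq_erfcx hx0.le, Efun_eq_erfcx hx0.le, hff_zero]
  push_cast
  rw [zero_mul, zero_add, one_mul]
  ring

/-- For `0 < x < 1`, `|θ| ≤ 1/2` and a positive integer `N`,
`∫_0^N f(t) dt = (e^{πi/4}/(2√x))·{E(θ) - f(N)·E(Nx+θ)}`. -/
theorem JN_eval (x θ : ℝ) (hx0 : 0 < x) (hx1 : x < 1) (hθ : |θ| ≤ 1/2)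
    (N : ℕ) (hN : 1 ≤ N) :
    (∫ t in (0:ℝ)..(N : ℝ), ff x θ t)
      = Complex.exp ((Real.pi : ℂ) * Complex.I / 4) / (2 * (Real.sqrt x : ℂ)) *
        (Efun x θ - ff x θ (N : ℝ) * Efun x ((N : ℝ) * x + θ)) :=
  JN_eval_general x θ hx0 N
end
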